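/- Under the linear herding model with w̃_ℓ < 1 for all ℓ ≥ 2 (so ϕ_j > 0 for all j), fix m ∈ 𝓜 and let β̂_{i,m} = (β_{i,m} − α_m)/ϕ_{i−1}. Then for every i ≥ 1 the martingale increment satisfies, almost surely, β̂_{i+1,m} − β̂_{i,m} = (w̃_{i+1}/ϕ_i)·[ 1{R_{i+1} = m} − β_{i,m} + (1 − γ_i + η_i γ_i)(β_{i,m} − α_m) ]; in particular there exist 𝓗_i-measurable random variables a_{i+1} ≤ b_{i+1} with b_{i+1} − a_{i+1} = w̃_{i+1}/ϕ_i such that a_{i+1} ≤ β̂_{i+1,m} − β̂_{i,m} ≤ b_{i+1} almost surely. -/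

import Mathlib

/-!
The weighted average obeys the stochastic-approximation recursion
`β_{i+1} = β_i + w̃_{i+1} (I - β_i)` with `I = 1{R_{i+1} = m}`; with `c_i = 1 - γ_i + η_i γ_i`
it reads `β_{i+1} - α_m = (1 - w̃_{i+1} c_i) (β_i - α_m) + w̃_{i+1} (I - β_i + c_i (β_i - α_m))`.
Since `ϕ_i = ϕ_{i-1} (1 - w̃_{i+1} c_i)`, dividing by `ϕ_i` turns the first summand into `β̂_{i,m}`,
which is the increment identity. In it everything except `I` is `𝓗_i`-measurable, and `I` ranges
over `{0, 1}`, whence the bounds.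
-/

open MeasureTheory Filter

/-- Cumulative weight `∑_{j=1}^i w_j`. -/
noncomputable def Sw (w : ℕ → ℝ) (i : ℕ) : ℝ := ∑ j ∈ Finset.Icc 1 i, w j

/-- Normalized weight `w̃_i = w_i / ∑_{j=1}^i w_j`. -/
noncomputable def wnorm (w : ℕ → ℝ) (i : ℕ) : ℝ := w i / Sw w i

/-- Historical collective opinion
`β_{i,m} = (∑_{j=1}^i w_j 1{R_j = m}) / (∑_{j=1}^i w_j)`. -/
noncomputable def betaH {Ω : Type*} (w : ℕ → ℝ) (R : ℕ → Ω → ℕ) (i m : ℕ) (ω : Ω) : ℝ :=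
  (∑ j ∈ Finset.Icc 1 i, w j * (if R j ω = m then (1 : ℝ) else 0)) / Sw w i

/-- `𝓗_i`: the σ-algebra generated by `R_1, …, R_i` (trivial for `i = 0`). -/
def Hsig {Ω : Type*} (R : ℕ → Ω → ℕ) (i : ℕ) : MeasurableSpace Ω :=
  ⨆ j ∈ Finset.Icc 1 i, MeasurableSpace.comap (R j) ⊤

/-- `ϕ_j = ∏_{ℓ=1}^j [1 − w̃_{ℓ+1} (1 − γ_ℓ + η_ℓ γ_ℓ)]` (with `ϕ_0 = 1`). -/
noncomputable def varphi (wt γ η : ℕ → ℝ) (j : ℕ) : ℝ :=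
  ∏ ℓ ∈ Finset.Icc 1 j, (1 - wt (ℓ + 1) * (1 - γ ℓ + η ℓ * γ ℓ))

/-- Rescaled error `β̂_{i,m} = (β_{i,m} − α_m)/ϕ_{i−1}`. -/
noncomputable def betaHat {Ω : Type*} (w γ η : ℕ → ℝ) (R : ℕ → Ω → ℕ) (α : ℕ → ℝ)
    (i m : ℕ) (ω : Ω) : ℝ :=
  (betaH w R i m ω - α m) / varphi (wnorm w) γ η (i - 1)

lemma Sw_succ (w : ℕ → ℝ) (i : ℕ) : Sw w (i + 1) = Sw w i + w (i + 1) :=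
  Finset.sum_Icc_succ_top (Nat.le_add_left 1 i) _

lemma Sw_pos {w : ℕ → ℝ} (hw : ∀ j, 0 ≤ w j) (hw1 : 0 < w 1) {i : ℕ} (hi : 1 ≤ i) :
    0 < Sw w i :=
  hw1.trans_le <| Finset.single_le_sum (fun j _ => hw j) (Finset.mem_Icc.2 ⟨le_rfl, hi⟩)

lemma betaH_succ {Ω : Type*} (w : ℕ → ℝ) (R : ℕ → Ω → ℕ) {i : ℕ} (hS : Sw w i ≠ 0)
    (hS' : Sw w (i + 1) ≠ 0) (m : ℕ) (ω : Ω) :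
    betaH w R (i + 1) m ω = betaH w R i m ω
      + wnorm w (i + 1) * ((if R (i + 1) ω = m then (1 : ℝ) else 0) - betaH w R i m ω) := by
  unfold betaH wnorm
  rw [Finset.sum_Icc_succ_top (Nat.le_add_left 1 i)]
  rw [Sw_succ] at hS' ⊢
  field_simp
  ring

lemma varphi_eq_varphi_pred_mul (wt γ η : ℕ → ℝ) {i : ℕ} (hi : 1 ≤ i) :
    varphi wt γ η i = varphi wt γ η (i - 1) * (1 - wt (i + 1) * (1 - γ i + η i * γ i)) := by
  obtain ⟨k, rfl⟩ := Nat.exists_eq_add_of_le' hi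
  exact Finset.prod_Icc_succ_top (Nat.le_add_left 1 k) _

lemma one_sub_add_mul_mem_Icc {γ η : ℝ} (hγ : γ ∈ Set.Icc (0 : ℝ) 1)
    (hη : η ∈ Set.Icc (0 : ℝ) 1) : 1 - γ + η * γ ∈ Set.Icc (0 : ℝ) 1 := by
  obtain ⟨hγ0, hγ1⟩ := hγ
  obtain ⟨hη0, hη1⟩ := hη
  constructor <;> nlinarith

lemma wnorm_nonneg {w : ℕ → ℝ} (hw : ∀ j, 0 ≤ w j) (i : ℕ) : 0 ≤ wnorm w i :=
  div_nonneg (hw i) (Finset.sum_nonneg fun j _ => hw j)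

lemma one_sub_wnorm_mul_pos {w γ η : ℕ → ℝ} (hw : ∀ j, 0 ≤ w j)
    (hwlt : ∀ ℓ : ℕ, 2 ≤ ℓ → wnorm w ℓ < 1)
    (hγ : ∀ i, γ i ∈ Set.Icc (0 : ℝ) 1) (hη : ∀ i, η i ∈ Set.Icc (0 : ℝ) 1)
    {ℓ : ℕ} (hℓ : 1 ≤ ℓ) :
    0 < 1 - wnorm w (ℓ + 1) * (1 - γ ℓ + η ℓ * γ ℓ) := by
  obtain ⟨hc0, hc1⟩ := one_sub_add_mul_mem_Icc (hγ ℓ) (hη ℓ)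
  have := hwlt (ℓ + 1) (by omega)
  nlinarith [wnorm_nonneg hw (ℓ + 1)]

lemma varphi_pos {w γ η : ℕ → ℝ} (hw : ∀ j, 0 ≤ w j)
    (hwlt : ∀ ℓ : ℕ, 2 ≤ ℓ → wnorm w ℓ < 1)
    (hγ : ∀ i, γ i ∈ Set.Icc (0 : ℝ) 1) (hη : ∀ i, η i ∈ Set.Icc (0 : ℝ) 1) (j : ℕ) :
    0 < varphi (wnorm w) γ η j :=
  Finset.prod_pos fun _ hℓ => one_sub_wnorm_mul_pos hw hwlt hγ hη (Finset.mem_Icc.1 hℓ).1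

lemma betaHat_succ_sub {Ω : Type*} (w γ η : ℕ → ℝ) (R : ℕ → Ω → ℕ) (α : ℕ → ℝ) (m : ℕ)
    {i : ℕ} (hi : 1 ≤ i) (hS : Sw w i ≠ 0) (hS' : Sw w (i + 1) ≠ 0)
    (hφ : varphi (wnorm w) γ η i ≠ 0) (ω : Ω) :
    betaHat w γ η R α (i + 1) m ω - betaHat w γ η R α i m ω
      = (wnorm w (i + 1) / varphi (wnorm w) γ η i) *
          ((if R (i + 1) ω = m then (1 : ℝ) else 0) - betaH w R i m ω
            + (1 - γ i + η i * γ i) * (betaH w R i m ω - α m)) := by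
  have hφ_pred := varphi_eq_varphi_pred_mul (wnorm w) γ η hi
  obtain ⟨hφ₀, hfac⟩ := mul_ne_zero_iff.1 (hφ_pred ▸ hφ)
  unfold betaHat
  rw [Nat.add_sub_cancel, betaH_succ w R hS hS', hφ_pred]
  generalize hf : 1 - wnorm w (i + 1) * (1 - γ i + η i * γ i) = f at hfac ⊢
  field_simp
  subst hf
  ring

lemma comap_le_Hsig {Ω : Type*} (R : ℕ → Ω → ℕ) {i j : ℕ} (hj : j ∈ Finset.Icc 1 i) :
    MeasurableSpace.comap (R j) ⊤ ≤ Hsig R i :=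
  le_iSup₂ (f := fun j _ => MeasurableSpace.comap (R j) (⊤ : MeasurableSpace ℕ)) j hj

lemma measurable_betaH {Ω : Type*} (w : ℕ → ℝ) (R : ℕ → Ω → ℕ) (i m : ℕ) :
    Measurable[Hsig R i] (betaH w R i m) := by
  refine Measurable.div_const (Finset.measurable_sum _ fun j hj => ?_) _
  have hs : MeasurableSet[Hsig R i] {ω | R j ω = m} := comap_le_Hsig R hj _ ⟨{m}, trivial, rfl⟩
  exact (Measurable.ite hs measurable_const measurable_const).const_mul _

lemma mul_add_ite_mem_Icc {q : ℝ} (hq : 0 ≤ q) (p : Prop) [Decidable p] (x : ℝ) :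
    q * x ≤ q * ((if p then 1 else 0) + x) ∧ q * ((if p then 1 else 0) + x) ≤ q * x + q := by
  split_ifs <;> constructor <;> nlinarith

theorem stmt_15_general
    {Ω : Type*} [MeasurableSpace Ω] (μ : Measure Ω)
    (α : ℕ → ℝ)
    (R : ℕ → Ω → ℕ)
    (w : ℕ → ℝ) (hw : ∀ j, 0 ≤ w j) (hw1 : 0 < w 1)
    (hwlt : ∀ ℓ : ℕ, 2 ≤ ℓ → wnorm w ℓ < 1)
    (γ : ℕ → ℝ) (hγ : ∀ i, γ i ∈ Set.Icc (0 : ℝ) 1)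
    (η : ℕ → ℝ) (hη : ∀ i, η i ∈ Set.Icc (0 : ℝ) 1)
    (m : ℕ) (i : ℕ) (hi : 1 ≤ i) :
    (∀ᵐ ω ∂μ,
      betaHat w γ η R α (i + 1) m ω - betaHat w γ η R α i m ω
        = (wnorm w (i + 1) / varphi (wnorm w) γ η i) *
            ((if R (i + 1) ω = m then (1 : ℝ) else 0) - betaH w R i m ω
              + (1 - γ i + η i * γ i) * (betaH w R i m ω - α m))) ∧
    ∃ a b : Ω → ℝ, Measurable[Hsig R i] a ∧ Measurable[Hsig R i] b ∧
      (∀ ω, b ω - a ω = wnorm w (i + 1) / varphi (wnorm w) γ η i) ∧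
      (∀ᵐ ω ∂μ,
        a ω ≤ betaHat w γ η R α (i + 1) m ω - betaHat w γ η R α i m ω ∧
        betaHat w γ η R α (i + 1) m ω - betaHat w γ η R α i m ω ≤ b ω) := by
  have hφ := varphi_pos hw hwlt hγ hη i
  have hid := betaHat_succ_sub w γ η R α m hi (Sw_pos hw hw1 hi).ne'
    (Sw_pos hw hw1 (by omega)).ne' hφ.ne'
  set q := wnorm w (i + 1) / varphi (wnorm w) γ η i
  set c := 1 - γ i + η i * γ i
  have hq : 0 ≤ q := div_nonneg (wnorm_nonneg hw _) hφ.le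
  have hβ := measurable_betaH w R i m
  have ha : Measurable[Hsig R i] fun ω => q * (c * (betaH w R i m ω - α m) - betaH w R i m ω) :=
    (((hβ.sub_const _).const_mul c).sub hβ).const_mul q
  refine ⟨.of_forall hid, _, _, ha, ha.add_const q, fun ω => add_sub_cancel_left _ _,
    .of_forall fun ω => ?_⟩
  rw [hid, sub_add_eq_add_sub, add_sub_assoc]
  exact mul_add_ite_mem_Icc hq _ _

/-- under the linear herding model with `w̃_ℓ < 1` for `ℓ ≥ 2`,
the martingale increment satisfies, almost surely,
`β̂_{i+1,m} − β̂_{i,m} = (w̃_{i+1}/ϕ_i)[1{R_{i+1}=m} − β_{i,m} + (1 − γ_i + η_i γ_i)(β_{i,m} − α_m)]`;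
in particular there are `𝓗_i`-measurable `a ≤ b` with `b − a = w̃_{i+1}/ϕ_i`
bounding the increment almost surely. -/
theorem stmt_15
    {Ω : Type*} [MeasurableSpace Ω] (μ : Measure Ω) [IsProbabilityMeasure μ]
    (M : ℕ) (hM : 1 ≤ M)
    (α : ℕ → ℝ) (hα : ∀ m ∈ Finset.Icc 1 M, α m ∈ Set.Icc (0 : ℝ) 1)
    (hα1 : ∑ m ∈ Finset.Icc 1 M, α m = 1)
    (R : ℕ → Ω → ℕ) (hRrange : ∀ i, 1 ≤ i → ∀ ω, R i ω ∈ Finset.Icc 1 M)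
    (hRmeas : ∀ i, Measurable (R i))
    (w : ℕ → ℝ) (hw : ∀ j, 0 ≤ w j) (hw1 : 0 < w 1)
    (hwlt : ∀ ℓ : ℕ, 2 ≤ ℓ → wnorm w ℓ < 1)
    (γ : ℕ → ℝ) (hγ : ∀ i, γ i ∈ Set.Icc (0 : ℝ) 1)
    (η : ℕ → ℝ) (hη : ∀ i, η i ∈ Set.Icc (0 : ℝ) 1)
    -- linear herding model
    (hmodel : ∀ i : ℕ, 1 ≤ i → ∀ m ∈ Finset.Icc 1 M,
      μ[(fun ω => if R (i + 1) ω = m then (1 : ℝ) else 0) | Hsig R i]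
        =ᵐ[μ] fun ω =>
          γ i * ((1 - η i) * betaH w R i m ω + η i * α m) + (1 - γ i) * α m)
    (m : ℕ) (hm : m ∈ Finset.Icc 1 M) (i : ℕ) (hi : 1 ≤ i) :
    (∀ᵐ ω ∂μ,
      betaHat w γ η R α (i + 1) m ω - betaHat w γ η R α i m ω
        = (wnorm w (i + 1) / varphi (wnorm w) γ η i) *
            ((if R (i + 1) ω = m then (1 : ℝ) else 0) - betaH w R i m ω
              + (1 - γ i + η i * γ i) * (betaH w R i m ω - α m))) ∧
    ∃ a b : Ω → ℝ, Measurable[Hsig R i] a ∧ Measurable[Hsig R i] b ∧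
      (∀ ω, b ω - a ω = wnorm w (i + 1) / varphi (wnorm w) γ η i) ∧
      (∀ᵐ ω ∂μ,
        a ω ≤ betaHat w γ η R α (i + 1) m ω - betaHat w γ η R α i m ω ∧
        betaHat w γ η R α (i + 1) m ω - betaHat w γ η R α i m ω ≤ b ω) :=
  stmt_15_general μ α R w hw hw1 hwlt γ hγ η hη m i hi
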